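/- (Theorem 1 of the paper, primal part: reduction of MPC(N) to a shorter master problem.) Partition the horizon {0,…,N} into p+1 consecutive segments of lengths N_0,…,N_p (N_0 + ⋯ + N_p = N), inducing subproblem data (stage costs and dynamics) from the original MPC(N) data. For i = 0,…,p−1 set A_{c,i} = 𝒜_i, a_{c,i} = 𝒟_i a_i, and let T_{c,i} be a matrix whose columns span the range of the segment controllability matrix 𝒮_i. Assume that for every parameter θ_i = (x̄_i, d̄_i) (respectively θ_p = x̄_p for the last segment) subproblem i attains a minimum, and let V̂_i(θ_i) denote its optimal value. Then: (a) the optimal value of MPC(N) equals the optimal value of the master problem of minimizing Σ_{i=0}^{p} V̂_i over variables x̄_0,…,x̄_p and d̄_0,…,d̄_{p−1} subject to x̄_0 = x̄ and x̄_{i+1} = A_{c,i}x̄_i + T_{c,i}d̄_i + a_{c,i} for i = 0,…,p−1; and (b) if (x̄*, d̄*) minimizes the master problem and for each i the trajectory (x_i*, u_i*) minimizes subproblem i with parameters (x̄_i*, d̄_i*), then the concatenated trajectory (with states x_{0,0}*,…,x_{N_0,0}* = x_{0,1}*,… and the concatenated controls) is an optimal solution of MPC(N). -/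
import Mathlib


open Matrix Finset

/-- Stage cost `½ (x,u)ᵀH_t(x,u) + f_tᵀ(x,u)` of the MPC problem at time `t`. -/
noncomputable def mpcStageCost (nx nu : ℕ)
    (Hx : ℕ → Matrix (Fin nx) (Fin nx) ℝ)
    (Hxu : ℕ → Matrix (Fin nx) (Fin nu) ℝ)
    (Hu : ℕ → Matrix (Fin nu) (Fin nu) ℝ)
    (fx : ℕ → Fin nx → ℝ) (fu : ℕ → Fin nu → ℝ)
    (t : ℕ) (xv : Fin nx → ℝ) (uv : Fin nu → ℝ) : ℝ :=
  ((1 : ℝ) / 2) * (xv ⬝ᵥ (Hx t *ᵥ xv) + 2 * (xv ⬝ᵥ (Hxu t *ᵥ uv))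
      + uv ⬝ᵥ (Hu t *ᵥ uv))
    + fx t ⬝ᵥ xv + fu t ⬝ᵥ uv

/-- Objective of `MPC(N)` (stage costs plus terminal cost). -/
noncomputable def mpcCost (N nx nu : ℕ)
    (Hx : ℕ → Matrix (Fin nx) (Fin nx) ℝ)
    (Hxu : ℕ → Matrix (Fin nx) (Fin nu) ℝ)
    (Hu : ℕ → Matrix (Fin nu) (Fin nu) ℝ)
    (fx : ℕ → Fin nx → ℝ) (fu : ℕ → Fin nu → ℝ)
    (HN : Matrix (Fin nx) (Fin nx) ℝ) (fN : Fin nx → ℝ)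
    (x : ℕ → Fin nx → ℝ) (u : ℕ → Fin nu → ℝ) : ℝ :=
  (∑ t ∈ Finset.range N, mpcStageCost nx nu Hx Hxu Hu fx fu t (x t) (u t))
    + ((1 : ℝ) / 2) * ((x N) ⬝ᵥ (HN *ᵥ x N)) + fN ⬝ᵥ (x N)

/-- Feasibility for `MPC(N)`: initial state and dynamics constraints. -/
def mpcFeasible (N nx nu : ℕ)
    (A : ℕ → Matrix (Fin nx) (Fin nx) ℝ)
    (B : ℕ → Matrix (Fin nx) (Fin nu) ℝ)
    (a : ℕ → Fin nx → ℝ) (xbar : Fin nx → ℝ)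
    (x : ℕ → Fin nx → ℝ) (u : ℕ → Fin nu → ℝ) : Prop :=
  x 0 = xbar ∧ ∀ t < N, x (t + 1) = A t *ᵥ x t + B t *ᵥ u t + a t

/-- Cost of segment `i` (global stage indices `off i + t`, `t < Ni i`). -/
noncomputable def segCost (nx nu : ℕ)
    (Hx : ℕ → Matrix (Fin nx) (Fin nx) ℝ)
    (Hxu : ℕ → Matrix (Fin nx) (Fin nu) ℝ)
    (Hu : ℕ → Matrix (Fin nu) (Fin nu) ℝ)
    (fx : ℕ → Fin nx → ℝ) (fu : ℕ → Fin nu → ℝ)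
    (Ni off : ℕ → ℕ) (i : ℕ)
    (xi : ℕ → Fin nx → ℝ) (ui : ℕ → Fin nu → ℝ) : ℝ :=
  ∑ t ∈ Finset.range (Ni i),
    mpcStageCost nx nu Hx Hxu Hu fx fu (off i + t) (xi t) (ui t)

/-- Segment dynamics for subproblem `i`, with initial state `xbi`. -/
def segDyn (nx nu : ℕ)
    (A : ℕ → Matrix (Fin nx) (Fin nx) ℝ)
    (B : ℕ → Matrix (Fin nx) (Fin nu) ℝ)
    (a : ℕ → Fin nx → ℝ) (Ni off : ℕ → ℕ) (i : ℕ) (xbi : Fin nx → ℝ)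
    (xi : ℕ → Fin nx → ℝ) (ui : ℕ → Fin nu → ℝ) : Prop :=
  xi 0 = xbi ∧
  ∀ t < Ni i, xi (t + 1) = A (off i + t) *ᵥ xi t + B (off i + t) *ᵥ ui t
    + a (off i + t)

/-! ### Auxiliary lemmas for the parallel MPC reduction -/

private lemma mpc_sum_split (g : ℕ → ℝ) (Ni off : ℕ → ℕ)
    (hoff0 : off 0 = 0) (hoff : ∀ i, off (i + 1) = off i + Ni i) :
    ∀ k : ℕ, ∑ t ∈ Finset.range (off k), g t
      = ∑ i ∈ Finset.range k, ∑ t ∈ Finset.range (Ni i), g (off i + t) := by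
  intro k
  induction k with
  | zero => simp [hoff0]
  | succ k ih => rw [hoff k, Finset.sum_range_add, ih, Finset.sum_range_succ]

private lemma mpc_off_mono (Ni off : ℕ → ℕ)
    (hoff : ∀ i, off (i + 1) = off i + Ni i) : Monotone off :=
  monotone_nat_of_le_succ fun i => by rw [hoff]; exact Nat.le_add_right _ _

private lemma mpc_decomp (Ni off : ℕ → ℕ)
    (hoff : ∀ i, off (i + 1) = off i + Ni i) :
    ∀ k, ∀ t, off 0 ≤ t → t < off k → ∃ i < k, ∃ s < Ni i, t = off i + s := by
  intro k
  induction k with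
  | zero => intro t h1 h2; omega
  | succ k ih =>
      intro t h1 h2
      rcases Nat.lt_or_ge t (off k) with h | h
      · obtain ⟨i, hi, s, hs, rfl⟩ := ih t h1 h
        exact ⟨i, by omega, s, hs, rfl⟩
      · have hk := hoff k
        exact ⟨k, by omega, t - off k, by omega, by omega⟩

private lemma mpc_state_formula {nx nu : ℕ}
    (A : ℕ → Matrix (Fin nx) (Fin nx) ℝ) (B : ℕ → Matrix (Fin nx) (Fin nu) ℝ)
    (a : ℕ → Fin nx → ℝ) (Ni off : ℕ → ℕ)
    (PhiSeg : ℕ → ℕ → Matrix (Fin nx) (Fin nx) ℝ) (i : ℕ)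
    (hPhiSegN : PhiSeg i (Ni i) = 1)
    (hPhiSeg : ∀ t < Ni i, PhiSeg i t = PhiSeg i (t + 1) * A (off i + t))
    (xbi : Fin nx → ℝ) (xi : ℕ → Fin nx → ℝ) (ui : ℕ → Fin nu → ℝ)
    (hd : segDyn nx nu A B a Ni off i xbi xi ui) :
    xi (Ni i) = PhiSeg i 0 *ᵥ xbi
      + (∑ t ∈ Finset.range (Ni i), PhiSeg i (t + 1) *ᵥ (B (off i + t) *ᵥ ui t))
      + ∑ t ∈ Finset.range (Ni i), PhiSeg i (t + 1) *ᵥ a (off i + t) := by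
  obtain ⟨h0, hdyn⟩ := hd
  have key : ∀ s, s ≤ Ni i → PhiSeg i s *ᵥ xi s = PhiSeg i 0 *ᵥ xbi
      + (∑ t ∈ Finset.range s, PhiSeg i (t + 1) *ᵥ (B (off i + t) *ᵥ ui t))
      + ∑ t ∈ Finset.range s, PhiSeg i (t + 1) *ᵥ a (off i + t) := by
    intro s
    induction s with
    | zero => intro _; simp [h0]
    | succ s ih =>
        intro hs
        have hslt : s < Ni i := hs
        rw [hdyn s hslt, Matrix.mulVec_add, Matrix.mulVec_add, Matrix.mulVec_mulVec,
          ← hPhiSeg s hslt, ih (le_of_lt hslt), Finset.sum_range_succ,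
          Finset.sum_range_succ]
        abel
  have hfin := key (Ni i) le_rfl
  rwa [hPhiSegN, Matrix.one_mulVec] at hfin

private lemma mpc_stitch (N nx nu : ℕ)
    (Hx : ℕ → Matrix (Fin nx) (Fin nx) ℝ) (Hxu : ℕ → Matrix (Fin nx) (Fin nu) ℝ)
    (Hu : ℕ → Matrix (Fin nu) (Fin nu) ℝ)
    (fx : ℕ → Fin nx → ℝ) (fu : ℕ → Fin nu → ℝ)
    (HN : Matrix (Fin nx) (Fin nx) ℝ) (fN : Fin nx → ℝ)
    (A : ℕ → Matrix (Fin nx) (Fin nx) ℝ) (B : ℕ → Matrix (Fin nx) (Fin nu) ℝ)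
    (a : ℕ → Fin nx → ℝ) (xbar : Fin nx → ℝ)
    (p : ℕ) (Ni off : ℕ → ℕ)
    (hNi : ∀ i ≤ p, 1 ≤ Ni i)
    (hoff0 : off 0 = 0) (hoff : ∀ i, off (i + 1) = off i + Ni i)
    (hoffN : off (p + 1) = N)
    (xbs : ℕ → Fin nx → ℝ)
    (xsol : ℕ → ℕ → Fin nx → ℝ) (usol : ℕ → ℕ → Fin nu → ℝ)
    (hseg : ∀ i ≤ p, segDyn nx nu A B a Ni off i (xbs i) (xsol i) (usol i))
    (hcont : ∀ i < p, xsol i (Ni i) = xbs (i + 1))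
    (hxb0 : xbs 0 = xbar)
    (X : ℕ → Fin nx → ℝ) (U : ℕ → Fin nu → ℝ)
    (hX : ∀ i ≤ p, ∀ t < Ni i, X (off i + t) = xsol i t)
    (hXN : X N = xsol p (Ni p))
    (hU : ∀ i ≤ p, ∀ t < Ni i, U (off i + t) = usol i t) :
    mpcFeasible N nx nu A B a xbar X U ∧
    mpcCost N nx nu Hx Hxu Hu fx fu HN fN X U
      = (∑ i ∈ Finset.range (p + 1),
          segCost nx nu Hx Hxu Hu fx fu Ni off i (xsol i) (usol i))
        + ((1 : ℝ) / 2) * (xsol p (Ni p) ⬝ᵥ (HN *ᵥ xsol p (Ni p)))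
        + fN ⬝ᵥ xsol p (Ni p) := by
  constructor
  · constructor
    · have h0 : X (off 0 + 0) = xsol 0 0 := hX 0 (Nat.zero_le p) 0 (hNi 0 (Nat.zero_le p))
      have hX0 : X 0 = xsol 0 0 := by simpa [hoff0] using h0
      rw [hX0, (hseg 0 (Nat.zero_le p)).1, hxb0]
    · intro t ht
      obtain ⟨i, hip, s, hs, rfl⟩ := mpc_decomp Ni off hoff (p + 1) t
        (by rw [hoff0]; exact Nat.zero_le t) (by rw [hoffN]; exact ht)
      have hi : i ≤ p := Nat.lt_succ_iff.mp hip
      have hXts : X (off i + s) = xsol i s := hX i hi s hs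
      have hUts : U (off i + s) = usol i s := hU i hi s hs
      have hXsucc : X (off i + s + 1) = xsol i (s + 1) := by
        rcases Nat.lt_or_ge (s + 1) (Ni i) with h | h
        · have h2 := hX i hi (s + 1) h
          rw [Nat.add_assoc]; exact h2
        · have hsN : s + 1 = Ni i := by omega
          rcases Nat.lt_or_ge i p with hiplt | hipe
          · have h1 : off i + s + 1 = off (i + 1) + 0 := by
              have := hoff i; omega
            rw [h1, hX (i + 1) hiplt 0 (hNi (i + 1) hiplt),
              (hseg (i + 1) hiplt).1, ← hcont i hiplt, hsN]
          · have hie : i = p := le_antisymm hi hipe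
            subst hie
            have h1 : off i + s + 1 = N := by
              have h2 := hoff i; omega
            rw [h1, hXN, hsN]
      rw [hXsucc, hXts, hUts]
      exact (hseg i hi).2 s hs
  · unfold mpcCost
    rw [hXN, ← hoffN,
      mpc_sum_split (fun t => mpcStageCost nx nu Hx Hxu Hu fx fu t (X t) (U t))
        Ni off hoff0 hoff (p + 1)]
    have hsum : ∑ i ∈ Finset.range (p + 1), ∑ t ∈ Finset.range (Ni i),
        mpcStageCost nx nu Hx Hxu Hu fx fu (off i + t) (X (off i + t)) (U (off i + t))
        = ∑ i ∈ Finset.range (p + 1),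
            segCost nx nu Hx Hxu Hu fx fu Ni off i (xsol i) (usol i) := by
      refine Finset.sum_congr rfl fun i hi => ?_
      have hi' : i ≤ p := Nat.lt_succ_iff.mp (Finset.mem_range.mp hi)
      unfold segCost
      exact Finset.sum_congr rfl fun t ht => by
        rw [hX i hi' t (Finset.mem_range.mp ht), hU i hi' t (Finset.mem_range.mp ht)]
    rw [hsum]

private lemma mpc_restrict (N nx nu : ℕ)
    (Hx : ℕ → Matrix (Fin nx) (Fin nx) ℝ) (Hxu : ℕ → Matrix (Fin nx) (Fin nu) ℝ)
    (Hu : ℕ → Matrix (Fin nu) (Fin nu) ℝ)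
    (fx : ℕ → Fin nx → ℝ) (fu : ℕ → Fin nu → ℝ)
    (HN : Matrix (Fin nx) (Fin nx) ℝ) (fN : Fin nx → ℝ)
    (A : ℕ → Matrix (Fin nx) (Fin nx) ℝ) (B : ℕ → Matrix (Fin nx) (Fin nu) ℝ)
    (a : ℕ → Fin nx → ℝ) (xbar : Fin nx → ℝ)
    (p : ℕ) (Ni off : ℕ → ℕ)
    (hoff0 : off 0 = 0) (hoff : ∀ i, off (i + 1) = off i + Ni i)
    (hoffN : off (p + 1) = N)
    (x : ℕ → Fin nx → ℝ) (u : ℕ → Fin nu → ℝ)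
    (hf : mpcFeasible N nx nu A B a xbar x u) :
    (∀ i ≤ p, segDyn nx nu A B a Ni off i (x (off i))
        (fun t => x (off i + t)) (fun t => u (off i + t))) ∧
    mpcCost N nx nu Hx Hxu Hu fx fu HN fN x u
      = (∑ i ∈ Finset.range (p + 1), segCost nx nu Hx Hxu Hu fx fu Ni off i
          (fun t => x (off i + t)) (fun t => u (off i + t)))
        + ((1 : ℝ) / 2) * ((x N) ⬝ᵥ (HN *ᵥ x N)) + fN ⬝ᵥ (x N) := by
  have hmono := mpc_off_mono Ni off hoff
  constructor
  · intro i hi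
    refine ⟨by simp, fun t ht => ?_⟩
    have hlt : off i + t < N := by
      have h1 := hoff i
      have h2 : off (i + 1) ≤ off (p + 1) := hmono (by omega)
      omega
    have hdyn := hf.2 (off i + t) hlt
    show x (off i + (t + 1)) = _
    rw [show off i + (t + 1) = off i + t + 1 from rfl, hdyn]
  · unfold mpcCost
    rw [← hoffN,
      mpc_sum_split (fun t => mpcStageCost nx nu Hx Hxu Hu fx fu t (x t) (u t))
        Ni off hoff0 hoff (p + 1), hoffN]
    rfl
/-- **Theorem 1 of the paper (primal part): parallel reduction of `MPC(N)` to a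
shorter master problem.**  The horizon is split into `p+1` segments of lengths
`N_0,…,N_p` (offsets `off`), the terminal-constraint data of segment `i < p` are
`A_c,i = 𝒜_i`, `a_c,i = 𝒟_i a_i` and `T_c,i` spans the range of the segment
controllability matrix `𝒮_i`, and `V̂_i` denote the (attained) optimal values of
the subproblems.  Then (a) the optimal value of `MPC(N)` equals the optimal value
of the master problem `min Σ V̂_i` subject to `x̄_0 = x̄`,
`x̄_{i+1} = A_c,i x̄_i + T_c,i d̄_i + a_c,i`; and (b) concatenating optimizers of
the subproblems at a master optimum yields an optimizer of `MPC(N)`. -/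
theorem mpc_parallel_reduction
    (N nx nu : ℕ) (hN : 1 ≤ N)
    (Hx : ℕ → Matrix (Fin nx) (Fin nx) ℝ)
    (Hxu : ℕ → Matrix (Fin nx) (Fin nu) ℝ)
    (Hu : ℕ → Matrix (Fin nu) (Fin nu) ℝ)
    (fx : ℕ → Fin nx → ℝ) (fu : ℕ → Fin nu → ℝ)
    (HN : Matrix (Fin nx) (Fin nx) ℝ) (fN : Fin nx → ℝ)
    (A : ℕ → Matrix (Fin nx) (Fin nx) ℝ)
    (B : ℕ → Matrix (Fin nx) (Fin nu) ℝ)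
    (a : ℕ → Fin nx → ℝ) (xbar : Fin nx → ℝ)
    -- convexity assumptions of MPC(N)
    (hHsym : ∀ t < N, (Hx t)ᵀ = Hx t ∧ (Hu t)ᵀ = Hu t)
    (hHpsd : ∀ t < N, ∀ (v : Fin nx → ℝ) (w : Fin nu → ℝ),
      0 ≤ v ⬝ᵥ (Hx t *ᵥ v) + 2 * (v ⬝ᵥ (Hxu t *ᵥ w)) + w ⬝ᵥ (Hu t *ᵥ w))
    (hHu : ∀ t < N, (Hu t).PosDef)
    (hHN : HN.PosSemidef)
    -- the partition of the horizon into p+1 segments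
    (p : ℕ) (Ni off : ℕ → ℕ)
    (hNi : ∀ i ≤ p, 1 ≤ Ni i)
    (hoff0 : off 0 = 0) (hoff : ∀ i, off (i + 1) = off i + Ni i)
    (hoffN : off (p + 1) = N)
    -- segment state-transition matrices Φ_i(t) = A_{off i+N_i−1}⋯A_{off i+t}
    (PhiSeg : ℕ → ℕ → Matrix (Fin nx) (Fin nx) ℝ)
    (hPhiSegN : ∀ i ≤ p, PhiSeg i (Ni i) = 1)
    (hPhiSeg : ∀ i ≤ p, ∀ t < Ni i, PhiSeg i t = PhiSeg i (t + 1) * A (off i + t))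
    -- terminal-constraint data of the subproblems
    (nd : ℕ → ℕ)
    (Ac : ℕ → Matrix (Fin nx) (Fin nx) ℝ)
    (Tc : (i : ℕ) → Matrix (Fin nx) (Fin (nd i)) ℝ)
    (ac : ℕ → Fin nx → ℝ)
    (hAc : ∀ i < p, Ac i = PhiSeg i 0)
    (hac : ∀ i < p, ac i = ∑ t ∈ Finset.range (Ni i), PhiSeg i (t + 1) *ᵥ a (off i + t))
    (hTc : ∀ i < p, ∀ v : Fin nx → ℝ,
      (∃ c : Fin (nd i) → ℝ, v = Tc i *ᵥ c) ↔
      (∃ uu : ℕ → Fin nu → ℝ,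
        v = ∑ t ∈ Finset.range (Ni i), PhiSeg i (t + 1) *ᵥ (B (off i + t) *ᵥ uu t)))
    -- value functions of the subproblems: minima are attained and equal V̂_i
    (Vhat : (i : ℕ) → (Fin nx → ℝ) → (Fin (nd i) → ℝ) → ℝ)
    (VhatP : (Fin nx → ℝ) → ℝ)
    (hV : ∀ i < p, ∀ (xbi : Fin nx → ℝ) (dbi : Fin (nd i) → ℝ),
      (∃ (xi : ℕ → Fin nx → ℝ) (ui : ℕ → Fin nu → ℝ),
        segDyn nx nu A B a Ni off i xbi xi ui ∧
        xi (Ni i) = Ac i *ᵥ xbi + Tc i *ᵥ dbi + ac i ∧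
        segCost nx nu Hx Hxu Hu fx fu Ni off i xi ui = Vhat i xbi dbi) ∧
      (∀ (xi : ℕ → Fin nx → ℝ) (ui : ℕ → Fin nu → ℝ),
        segDyn nx nu A B a Ni off i xbi xi ui →
        xi (Ni i) = Ac i *ᵥ xbi + Tc i *ᵥ dbi + ac i →
        Vhat i xbi dbi ≤ segCost nx nu Hx Hxu Hu fx fu Ni off i xi ui))
    (hVP : ∀ xbp : Fin nx → ℝ,
      (∃ (xp : ℕ → Fin nx → ℝ) (up : ℕ → Fin nu → ℝ),
        segDyn nx nu A B a Ni off p xbp xp up ∧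
        segCost nx nu Hx Hxu Hu fx fu Ni off p xp up
          + ((1 : ℝ) / 2) * ((xp (Ni p)) ⬝ᵥ (HN *ᵥ xp (Ni p))) + fN ⬝ᵥ (xp (Ni p))
          = VhatP xbp) ∧
      (∀ (xp : ℕ → Fin nx → ℝ) (up : ℕ → Fin nu → ℝ),
        segDyn nx nu A B a Ni off p xbp xp up →
        VhatP xbp ≤ segCost nx nu Hx Hxu Hu fx fu Ni off p xp up
          + ((1 : ℝ) / 2) * ((xp (Ni p)) ⬝ᵥ (HN *ᵥ xp (Ni p))) + fN ⬝ᵥ (xp (Ni p)))) :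
    -- (a) the optimal values of MPC(N) and of the master problem coincide
    (sInf {c : ℝ | ∃ (x : ℕ → Fin nx → ℝ) (u : ℕ → Fin nu → ℝ),
        mpcFeasible N nx nu A B a xbar x u ∧
        mpcCost N nx nu Hx Hxu Hu fx fu HN fN x u = c}
      = sInf {c : ℝ | ∃ (xb : ℕ → Fin nx → ℝ) (db : (i : ℕ) → Fin (nd i) → ℝ),
        (xb 0 = xbar ∧
          ∀ i < p, xb (i + 1) = Ac i *ᵥ xb i + Tc i *ᵥ db i + ac i) ∧
        ((∑ i ∈ Finset.range p, Vhat i (xb i) (db i)) + VhatP (xb p)) = c})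
    ∧
    -- (b) concatenation of subproblem optimizers at a master optimum solves MPC(N)
    (∀ (xbs : ℕ → Fin nx → ℝ) (dbs : (i : ℕ) → Fin (nd i) → ℝ),
      (xbs 0 = xbar ∧ ∀ i < p, xbs (i + 1) = Ac i *ᵥ xbs i + Tc i *ᵥ dbs i + ac i) →
      (∀ (xb : ℕ → Fin nx → ℝ) (db : (i : ℕ) → Fin (nd i) → ℝ),
        (xb 0 = xbar ∧ ∀ i < p, xb (i + 1) = Ac i *ᵥ xb i + Tc i *ᵥ db i + ac i) →
        (∑ i ∈ Finset.range p, Vhat i (xbs i) (dbs i)) + VhatP (xbs p)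
          ≤ (∑ i ∈ Finset.range p, Vhat i (xb i) (db i)) + VhatP (xb p)) →
      ∀ (xsol : ℕ → ℕ → Fin nx → ℝ) (usol : ℕ → ℕ → Fin nu → ℝ),
      (∀ i < p,
        segDyn nx nu A B a Ni off i (xbs i) (xsol i) (usol i) ∧
        xsol i (Ni i) = Ac i *ᵥ xbs i + Tc i *ᵥ dbs i + ac i ∧
        segCost nx nu Hx Hxu Hu fx fu Ni off i (xsol i) (usol i)
          = Vhat i (xbs i) (dbs i)) →
      (segDyn nx nu A B a Ni off p (xbs p) (xsol p) (usol p) ∧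
        segCost nx nu Hx Hxu Hu fx fu Ni off p (xsol p) (usol p)
          + ((1 : ℝ) / 2) * ((xsol p (Ni p)) ⬝ᵥ (HN *ᵥ xsol p (Ni p)))
          + fN ⬝ᵥ (xsol p (Ni p)) = VhatP (xbs p)) →
      ∀ (X : ℕ → Fin nx → ℝ) (U : ℕ → Fin nu → ℝ),
      (∀ i ≤ p, ∀ t < Ni i, X (off i + t) = xsol i t) →
      (X N = xsol p (Ni p)) →
      (∀ i ≤ p, ∀ t < Ni i, U (off i + t) = usol i t) →
      mpcFeasible N nx nu A B a xbar X U ∧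
      ∀ (x : ℕ → Fin nx → ℝ) (u : ℕ → Fin nu → ℝ),
        mpcFeasible N nx nu A B a xbar x u →
        mpcCost N nx nu Hx Hxu Hu fx fu HN fN X U
          ≤ mpcCost N nx nu Hx Hxu Hu fx fu HN fN x u) := by

  have hmono := mpc_off_mono Ni off hoff
  -- Key 1: a master-feasible point can be stitched into an MPC-feasible
  -- trajectory of the same cost.
  have key1 : ∀ (xb : ℕ → Fin nx → ℝ) (db : (i : ℕ) → Fin (nd i) → ℝ),
      (xb 0 = xbar ∧ ∀ i < p, xb (i + 1) = Ac i *ᵥ xb i + Tc i *ᵥ db i + ac i) →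
      ∃ (X : ℕ → Fin nx → ℝ) (U : ℕ → Fin nu → ℝ),
        mpcFeasible N nx nu A B a xbar X U ∧
        mpcCost N nx nu Hx Hxu Hu fx fu HN fN X U
          = (∑ i ∈ Finset.range p, Vhat i (xb i) (db i)) + VhatP (xb p) := by
    intro xb db hm
    have hchoice : ∀ i : ℕ, ∃ (xi : ℕ → Fin nx → ℝ) (ui : ℕ → Fin nu → ℝ),
        (i < p → segDyn nx nu A B a Ni off i (xb i) xi ui ∧
          xi (Ni i) = xb (i + 1) ∧
          segCost nx nu Hx Hxu Hu fx fu Ni off i xi ui = Vhat i (xb i) (db i)) ∧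
        (i = p → segDyn nx nu A B a Ni off p (xb p) xi ui ∧
          segCost nx nu Hx Hxu Hu fx fu Ni off p xi ui
            + ((1 : ℝ) / 2) * (xi (Ni p) ⬝ᵥ (HN *ᵥ xi (Ni p))) + fN ⬝ᵥ xi (Ni p)
            = VhatP (xb p)) := by
      intro i
      rcases Nat.lt_trichotomy i p with h | h | h
      · obtain ⟨xi, ui, h1, h2, h3⟩ := (hV i h (xb i) (db i)).1
        exact ⟨xi, ui, fun _ => ⟨h1, by rw [h2, ← hm.2 i h], h3⟩,
          fun he => absurd he (by omega)⟩
      · subst h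
        obtain ⟨xp, up, h1, h2⟩ := (hVP (xb i)).1
        exact ⟨xp, up, fun hc => absurd hc (lt_irrefl _), fun _ => ⟨h1, h2⟩⟩
      · exact ⟨fun _ _ => 0, fun _ _ => 0, fun hc => absurd hc (by omega),
          fun he => absurd he (by omega)⟩
    choose xsol usol hlt heq using hchoice
    have hseg : ∀ i ≤ p, segDyn nx nu A B a Ni off i (xb i) (xsol i) (usol i) := by
      intro i hi
      rcases Nat.lt_or_ge i p with h | h
      · exact (hlt i h).1
      · have hip : i = p := le_antisymm hi h
        subst hip
        exact (heq i rfl).1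
    have hcont : ∀ i < p, xsol i (Ni i) = xb (i + 1) := fun i hi => (hlt i hi).2.1
    set idx : ℕ → ℕ := fun t => Nat.findGreatest (fun j => off j ≤ t) p with hidxdef
    have hidx : ∀ i ≤ p, ∀ s, idx (off i + s) = i ∨ i < idx (off i + s) := by
      intro i hi s
      have h1 : i ≤ idx (off i + s) := Nat.le_findGreatest hi (Nat.le_add_right _ _)
      omega
    have hidx2 : ∀ i ≤ p, ∀ s < Ni i, idx (off i + s) = i := by
      intro i hi s hs
      rcases hidx i hi s with h | h
      · exact h
      · exfalso
        have h3 : off (idx (off i + s)) ≤ off i + s :=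
          Nat.findGreatest_spec (P := fun j => off j ≤ off i + s) hi (Nat.le_add_right _ _)
        have h4 : off (i + 1) ≤ off (idx (off i + s)) := hmono h
        have h5 := hoff i
        omega
    have hXeq : ∀ i ≤ p, ∀ s < Ni i, off i + s ≠ N := by
      intro i hi s hs
      have h1 := hoff i
      have h2 : off (i + 1) ≤ off (p + 1) := hmono (by omega)
      have h3 := hoffN
      omega
    set X : ℕ → Fin nx → ℝ :=
      fun t => if t = N then xsol p (Ni p) else xsol (idx t) (t - off (idx t)) with hXdef
    set U : ℕ → Fin nu → ℝ := fun t => usol (idx t) (t - off (idx t)) with hUdef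
    have hXp : ∀ i ≤ p, ∀ s < Ni i, X (off i + s) = xsol i s := by
      intro i hi s hs
      simp only [hXdef, if_neg (hXeq i hi s hs), hidx2 i hi s hs,
        Nat.add_sub_cancel_left]
    have hUp : ∀ i ≤ p, ∀ s < Ni i, U (off i + s) = usol i s := by
      intro i hi s hs
      simp only [hUdef, hidx2 i hi s hs, Nat.add_sub_cancel_left]
    have hXN' : X N = xsol p (Ni p) := by simp [hXdef]
    obtain ⟨hfeas, hcost⟩ := mpc_stitch N nx nu Hx Hxu Hu fx fu HN fN A B a xbar
      p Ni off hNi hoff0 hoff hoffN xb xsol usol hseg hcont hm.1 X U hXp hXN' hUp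
    refine ⟨X, U, hfeas, ?_⟩
    rw [hcost, Finset.sum_range_succ,
      Finset.sum_congr rfl (fun i hi => (hlt i (Finset.mem_range.mp hi)).2.2)]
    linarith [(heq p rfl).2]
  -- Key 2: restricting an MPC-feasible trajectory yields a master-feasible
  -- point whose master objective is at most the MPC cost.
  have key2 : ∀ (x : ℕ → Fin nx → ℝ) (u : ℕ → Fin nu → ℝ),
      mpcFeasible N nx nu A B a xbar x u →
      ∃ (xb : ℕ → Fin nx → ℝ) (db : (i : ℕ) → Fin (nd i) → ℝ),
        (xb 0 = xbar ∧ ∀ i < p, xb (i + 1) = Ac i *ᵥ xb i + Tc i *ᵥ db i + ac i) ∧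
        (∑ i ∈ Finset.range p, Vhat i (xb i) (db i)) + VhatP (xb p)
          ≤ mpcCost N nx nu Hx Hxu Hu fx fu HN fN x u := by
    intro x u hfxu
    obtain ⟨hsegr, hcostr⟩ := mpc_restrict N nx nu Hx Hxu Hu fx fu HN fN A B a
      xbar p Ni off hoff0 hoff hoffN x u hfxu
    have hdb : ∀ i : ℕ, ∃ c : Fin (nd i) → ℝ,
        i < p → x (off (i + 1)) = Ac i *ᵥ x (off i) + Tc i *ᵥ c + ac i := by
      intro i
      by_cases hi : i < p
      · obtain ⟨c, hc⟩ := (hTc i hi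
          (∑ t ∈ Finset.range (Ni i),
            PhiSeg i (t + 1) *ᵥ (B (off i + t) *ᵥ u (off i + t)))).mpr
          ⟨fun t => u (off i + t), rfl⟩
        refine ⟨c, fun _ => ?_⟩
        have hsf := mpc_state_formula A B a Ni off PhiSeg i
          (hPhiSegN i (le_of_lt hi)) (hPhiSeg i (le_of_lt hi)) (x (off i))
          (fun t => x (off i + t)) (fun t => u (off i + t))
          (hsegr i (le_of_lt hi))
        rw [hAc i hi, hac i hi, ← hc, hoff i]
        exact hsf
      · exact ⟨0, fun h => absurd h hi⟩
    choose db hdb using hdb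
    refine ⟨fun i => x (off i), db,
      ⟨by show x (off 0) = xbar; rw [hoff0]; exact hfxu.1, fun i hi => hdb i hi⟩, ?_⟩
    have hiV : ∀ i ∈ Finset.range p, Vhat i (x (off i)) (db i)
        ≤ segCost nx nu Hx Hxu Hu fx fu Ni off i
            (fun t => x (off i + t)) (fun t => u (off i + t)) := by
      intro i hi
      have hi' := Finset.mem_range.mp hi
      refine (hV i hi' (x (off i)) (db i)).2 _ _ (hsegr i (le_of_lt hi')) ?_
      show x (off i + Ni i) = _
      rw [← hoff i]
      exact hdb i hi'
    have hPV : VhatP (x (off p))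
        ≤ segCost nx nu Hx Hxu Hu fx fu Ni off p
            (fun t => x (off p + t)) (fun t => u (off p + t))
          + ((1 : ℝ) / 2) * (x N ⬝ᵥ (HN *ᵥ x N)) + fN ⬝ᵥ x N := by
      have h := (hVP (x (off p))).2 (fun t => x (off p + t))
        (fun t => u (off p + t)) (hsegr p le_rfl)
      have hNp : off p + Ni p = N := by
        have h1 := hoff p
        have h2 := hoffN
        omega
      simpa [hNp] using h
    rw [hcostr, Finset.sum_range_succ]
    have hsumle := Finset.sum_le_sum hiV
    linarith [hsumle, hPV]
  constructor
  · -- part (a)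
    have habs : ∀ (Sv Mv : Set ℝ), Mv ⊆ Sv → (∀ c ∈ Sv, ∃ c' ∈ Mv, c' ≤ c) →
        Mv.Nonempty → sInf Sv = sInf Mv := by
      intro Sv Mv hsub hdom hne
      by_cases hbdd : BddBelow Sv
      · apply le_antisymm
        · exact csInf_le_csInf hbdd hne hsub
        · refine le_csInf ⟨hne.choose, hsub hne.choose_spec⟩ fun c hc => ?_
          obtain ⟨c', hc', hle⟩ := hdom c hc
          exact le_trans (csInf_le (BddBelow.mono hsub hbdd) hc') hle
      · have hbddM : ¬ BddBelow Mv := by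
          rintro ⟨b, hb⟩
          refine hbdd ⟨b, fun c hc => ?_⟩
          obtain ⟨c', hc', hle⟩ := hdom c hc
          exact le_trans (hb hc') hle
        rw [Real.sInf_of_not_bddBelow hbdd, Real.sInf_of_not_bddBelow hbddM]
    refine habs _ _ ?_ ?_ ?_
    · rintro c ⟨xb, db, hmf, rfl⟩
      obtain ⟨X, U, hfeas, hcost⟩ := key1 xb db hmf
      exact ⟨X, U, hfeas, hcost⟩
    · rintro c ⟨x, u, hfxu, rfl⟩
      obtain ⟨xb, db, hmf, hle⟩ := key2 x u hfxu
      exact ⟨_, ⟨xb, db, hmf, rfl⟩, hle⟩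
    · refine ⟨_, ⟨fun i => Nat.rec xbar
        (fun j xj => Ac j *ᵥ xj + Tc j *ᵥ (0 : Fin (nd j) → ℝ) + ac j) i,
        fun _ => 0, ⟨rfl, fun i _ => rfl⟩, rfl⟩⟩
  · -- part (b)
    intro xbs dbs hmfeas hmopt xsol usol hsols hsolp X U hX hXN hU
    have hseg : ∀ i ≤ p, segDyn nx nu A B a Ni off i (xbs i) (xsol i) (usol i) := by
      intro i hi
      rcases Nat.lt_or_ge i p with h | h
      · exact (hsols i h).1
      · have hip : i = p := le_antisymm hi h
        subst hip
        exact hsolp.1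
    have hcont : ∀ i < p, xsol i (Ni i) = xbs (i + 1) := by
      intro i hi
      rw [(hsols i hi).2.1, ← hmfeas.2 i hi]
    obtain ⟨hfeas, hcost⟩ := mpc_stitch N nx nu Hx Hxu Hu fx fu HN fN A B a xbar
      p Ni off hNi hoff0 hoff hoffN xbs xsol usol hseg hcont hmfeas.1 X U hX hXN hU
    refine ⟨hfeas, fun x u hfxu => ?_⟩
    have hXval : mpcCost N nx nu Hx Hxu Hu fx fu HN fN X U
        = (∑ i ∈ Finset.range p, Vhat i (xbs i) (dbs i)) + VhatP (xbs p) := by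
      rw [hcost, Finset.sum_range_succ,
        Finset.sum_congr rfl (fun i hi => (hsols i (Finset.mem_range.mp hi)).2.2)]
      linarith [hsolp.2]
    obtain ⟨xb, db, hmf2, hle⟩ := key2 x u hfxu
    calc mpcCost N nx nu Hx Hxu Hu fx fu HN fN X U
        = (∑ i ∈ Finset.range p, Vhat i (xbs i) (dbs i)) + VhatP (xbs p) := hXval
      _ ≤ (∑ i ∈ Finset.range p, Vhat i (xb i) (db i)) + VhatP (xb p) :=
          hmopt xb db hmf2
      _ ≤ mpcCost N nx nu Hx Hxu Hu fx fu HN fN x u := hle
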